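/- Let M be a positive integer and h > 0. Let w, u be grid functions on {0,…,M} with w₀ = w_M = u₀ = u_M = 0, and let R be any grid function on {0,…,M}, such that wᵢ = δₓ²uᵢ − (h²/12)·δₓ²wᵢ + Rᵢ for 1 ≤ i ≤ M−1. Then the exact identity ⟨w,u⟩ = −|u|₁² − (h²/12)·‖w‖² + (h⁴/144)·|w|₁² + (h²/12)·⟨R,w⟩ + ⟨R,u⟩ holds. -/

import Mathlib

/-- The second difference quotient `δₓ²vᵢ = (v_{i+1} - 2vᵢ + v_{i-1})/h²`. -/
noncomputable def dx2 (h : ℝ) (v : ℕ → ℝ) (i : ℕ) : ℝ :=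
  (v (i + 1) - 2 * v i + v (i - 1)) / h ^ 2

/-- The discrete inner product `⟨u,v⟩ = h ∑_{i=1}^{M-1} uᵢ vᵢ`. -/
noncomputable def inn (M : ℕ) (h : ℝ) (u v : ℕ → ℝ) : ℝ :=
  h * ∑ i ∈ Finset.Icc 1 (M - 1), u i * v i

/-- The squared discrete `H¹`-seminorm `|v|₁² = h ∑_{i=1}^{M} ((vᵢ - v_{i-1})/h)²`. -/
noncomputable def sem1sq (M : ℕ) (h : ℝ) (v : ℕ → ℝ) : ℝ :=
  h * ∑ i ∈ Finset.Icc 1 M, ((v i - v (i - 1)) / h) ^ 2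

/-- The squared discrete `L²`-norm `‖v‖² = h ∑_{i=1}^{M-1} vᵢ²`. -/
noncomputable def normsq (M : ℕ) (h : ℝ) (v : ℕ → ℝ) : ℝ :=
  h * ∑ i ∈ Finset.Icc 1 (M - 1), (v i) ^ 2

/-!
Pair the scheme with `u` and with `w`. Summation by parts (Green's formula with zero boundary
values) turns `⟨δₓ²v, z⟩` into `-[v, z]`, where `[·,·]` is the discrete `H¹` inner product. Pairing
with `u` gives `⟨w,u⟩ = -|u|₁² + (h²/12)[w,u] + ⟨R,u⟩`, pairing with `w` gives
`‖w‖² = -[u,w] + (h²/12)|w|₁² + ⟨R,w⟩`; eliminating `[u,w]` yields the identity.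
-/

open Finset

noncomputable def sem1Inner (M : ℕ) (h : ℝ) (v z : ℕ → ℝ) : ℝ :=
  h * ∑ i ∈ Icc 1 M, (v i - v (i - 1)) / h * ((z i - z (i - 1)) / h)

theorem sum_secondDiff_mul_add_sum_diff_mul_diff (v z : ℕ → ℝ) (n : ℕ) :
    ∑ i ∈ Icc 1 n, (v (i + 1) - 2 * v i + v (i - 1)) * z i
      + ∑ i ∈ Icc 1 (n + 1), (v i - v (i - 1)) * (z i - z (i - 1))
      = (v (n + 1) - v n) * z (n + 1) - (v 1 - v 0) * z 0 := by
  induction n with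
  | zero => simp [mul_sub]
  | succ n ih =>
    rw [sum_Icc_succ_top (by omega), sum_Icc_succ_top (by omega : 1 ≤ n + 1 + 1)]
    simp only [Nat.add_sub_cancel] at ih ⊢
    linear_combination ih

theorem sum_secondDiff_mul_eq_neg_sum_diff_mul_diff (M : ℕ) (v z : ℕ → ℝ)
    (hz0 : z 0 = 0) (hzM : z M = 0) :
    ∑ i ∈ Icc 1 (M - 1), (v (i + 1) - 2 * v i + v (i - 1)) * z i
      = -∑ i ∈ Icc 1 M, (v i - v (i - 1)) * (z i - z (i - 1)) := by
  obtain _ | n := M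
  · simp
  · have := sum_secondDiff_mul_add_sum_diff_mul_diff v z n
    rw [hz0, hzM] at this
    rw [Nat.add_sub_cancel]
    linear_combination this

theorem inn_dx2_left (M : ℕ) (h : ℝ) (v z : ℕ → ℝ) (hz0 : z 0 = 0) (hzM : z M = 0) :
    inn M h (dx2 h v) z = -sem1Inner M h v z := by
  have hsum := sum_secondDiff_mul_eq_neg_sum_diff_mul_diff M v z hz0 hzM
  simp only [inn, sem1Inner, dx2, div_mul_div_comm, ← sq]
  simp only [div_mul_eq_mul_div, ← sum_div, hsum]
  ring

theorem sem1Inner_comm (M : ℕ) (h : ℝ) (v z : ℕ → ℝ) :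
    sem1Inner M h v z = sem1Inner M h z v := by
  simp only [sem1Inner, mul_comm]

theorem sem1sq_eq_sem1Inner (M : ℕ) (h : ℝ) (v : ℕ → ℝ) : sem1sq M h v = sem1Inner M h v v := by
  simp only [sem1sq, sem1Inner, sq]

theorem normsq_eq_inn (M : ℕ) (h : ℝ) (v : ℕ → ℝ) : normsq M h v = inn M h v v := by
  simp only [normsq, inn, sq]

theorem inn_congr_left (M : ℕ) (h : ℝ) {f g : ℕ → ℝ} (z : ℕ → ℝ)
    (hfg : ∀ i, 1 ≤ i → i ≤ M - 1 → f i = g i) : inn M h f z = inn M h g z := by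
  unfold inn
  congr 1
  refine sum_congr rfl fun i hi => ?_
  obtain ⟨hi1, hi2⟩ := mem_Icc.mp hi
  rw [hfg i hi1 hi2]

theorem inn_add_left (M : ℕ) (h : ℝ) (f g z : ℕ → ℝ) :
    inn M h (f + g) z = inn M h f z + inn M h g z := by
  simp only [inn, Pi.add_apply, add_mul, sum_add_distrib, mul_add]

theorem inn_sub_left (M : ℕ) (h : ℝ) (f g z : ℕ → ℝ) :
    inn M h (f - g) z = inn M h f z - inn M h g z := by
  simp only [inn, Pi.sub_apply, sub_mul, sum_sub_distrib, mul_sub]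

theorem inn_smul_left (M : ℕ) (h c : ℝ) (f z : ℕ → ℝ) :
    inn M h (c • f) z = c * inn M h f z := by
  simp only [inn, Pi.smul_apply, smul_eq_mul, mul_assoc, ← mul_sum]
  ring

theorem stmt_7_general (M : ℕ) (h : ℝ)
    (w u R : ℕ → ℝ) (hw0 : w 0 = 0) (hwM : w M = 0) (hu0 : u 0 = 0) (huM : u M = 0)
    (hrel : ∀ i, 1 ≤ i → i ≤ M - 1 → w i = dx2 h u i - h ^ 2 / 12 * dx2 h w i + R i) :
    inn M h w u = -sem1sq M h u - h ^ 2 / 12 * normsq M h w + h ^ 4 / 144 * sem1sq M h w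
      + h ^ 2 / 12 * inn M h R w + inn M h R u := by
  have pair : ∀ z : ℕ → ℝ, z 0 = 0 → z M = 0 →
      inn M h w z = -sem1Inner M h u z + h ^ 2 / 12 * sem1Inner M h w z + inn M h R z := by
    intro z hz0 hzM
    rw [inn_congr_left M h (g := dx2 h u - (h ^ 2 / 12) • dx2 h w + R) z
        fun i hi hi' => by simp [hrel i hi hi'],
      inn_add_left, inn_sub_left, inn_smul_left, inn_dx2_left M h u z hz0 hzM,
      inn_dx2_left M h w z hz0 hzM]
    ring
  have with_u := pair u hu0 huM
  have with_w := pair w hw0 hwM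
  rw [sem1Inner_comm M h u w] at with_w
  rw [sem1sq_eq_sem1Inner, sem1sq_eq_sem1Inner, normsq_eq_inn]
  linear_combination with_u + h ^ 2 / 12 * with_w

/-- If `wᵢ = δₓ²uᵢ - (h²/12)δₓ²wᵢ + Rᵢ` for `1 ≤ i ≤ M-1` and `u, w` vanish at the
endpoints, then
`⟨w,u⟩ = -|u|₁² - (h²/12)‖w‖² + (h⁴/144)|w|₁² + (h²/12)⟨R,w⟩ + ⟨R,u⟩`. -/
theorem stmt_7 (M : ℕ) (hM : 0 < M) (h : ℝ) (hh : 0 < h)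
    (w u R : ℕ → ℝ) (hw0 : w 0 = 0) (hwM : w M = 0) (hu0 : u 0 = 0) (huM : u M = 0)
    (hrel : ∀ i, 1 ≤ i → i ≤ M - 1 → w i = dx2 h u i - h ^ 2 / 12 * dx2 h w i + R i) :
    inn M h w u = -sem1sq M h u - h ^ 2 / 12 * normsq M h w + h ^ 4 / 144 * sem1sq M h w
      + h ^ 2 / 12 * inn M h R w + inn M h R u :=
  stmt_7_general M h w u R hw0 hwM hu0 huM hrel
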